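/- arXiv:2502.12740 — 2 statements merged into one kernel-verified Lean document; each statement's English description precedes it below -/
import Mathlib

section
/- Characterization of IPSR equilibria: a state (I, P, S, R) with all coordinates nonnegative and I + P + S + R = 1 is an equilibrium of the IPSR system (all four time derivatives are zero) if and only if S = 0 and δI = μP. -/
/-- Characterization of IPSR equilibria: F = 0 iff S = 0 and δI = μP. -/
theorem ipsr_equilibrium_characterization (α β γ δ μ σ ρ k : ℝ)
    (hα : 0 < α) (hβ : 0 < β) (hγ : 0 < γ) (hδ : 0 < δ)
    (hμ : 0 < μ) (hσ : 0 < σ) (hρ : 0 < ρ) (hk : 0 < k)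
    (I P S R : ℝ) (hI : 0 ≤ I) (hP : 0 ≤ P) (hS : 0 ≤ S) (hR : 0 ≤ R)
    (hsum : I + P + S + R = 1) :
    (-δ * I - (α + γ) * k * I * S + μ * P = 0 ∧
     δ * I - (σ + ρ) * k * P * S - μ * P = 0 ∧
     α * k * I * S + σ * k * P * S - β * S = 0 ∧
     ρ * k * P * S + γ * k * I * S + β * S = 0) ↔
    (S = 0 ∧ δ * I = μ * P) := by
  constructor
  · rintro ⟨h1, h2, h3, h4⟩
    have t1 : 0 ≤ ρ * k * P * S := by positivity
    have t2 : 0 ≤ γ * k * I * S := by positivity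
    have hbS : β * S = 0 := by nlinarith
    have hS0 : S = 0 := by
      rcases mul_eq_zero.mp hbS with h | h
      · exact absurd h hβ.ne'
      · exact h
    refine ⟨hS0, by nlinarith⟩
  · rintro ⟨hS0, hd⟩
    subst hS0
    refine ⟨by nlinarith, by nlinarith, by ring, by ring⟩
end

section
/- The Lyapunov function L = ½(I + P)² is nonincreasing along IPSR trajectories: if I, P, S ≥ 0 satisfy the IPSR equations, then dL/dt = (I+P)·(-(α+γ)k·I·S - (σ+ρ)k·P·S) ≤ 0, with dL/dt = 0 whenever S = 0. -/
theorem HasDerivAt.half_sq {h : ℝ → ℝ} {h' x : ℝ} (hh : HasDerivAt h h' x) :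
    HasDerivAt (fun u => 1 / 2 * h u ^ 2) (h x * h') x :=
  ((hh.fun_pow 2).const_mul (1 / 2)).congr_deriv (by norm_num; ring)

theorem ipsr_lyapunov_general (α γ σ ρ δ μ k : ℝ)
    (hα : 0 < α) (hγ : 0 < γ) (hσ : 0 < σ) (hρ : 0 < ρ)
    (hk : 0 < k)
    (I P S : ℝ → ℝ)
    (hInn : ∀ t, 0 ≤ I t) (hPnn : ∀ t, 0 ≤ P t) (hSnn : ∀ t, 0 ≤ S t)
    (hI : ∀ t, HasDerivAt I (-δ * I t - (α + γ) * k * I t * S t + μ * P t) t)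
    (hP : ∀ t, HasDerivAt P (δ * I t - (σ + ρ) * k * P t * S t - μ * P t) t) :
    ∀ t : ℝ,
      HasDerivAt (fun u => (1 / 2) * (I u + P u) ^ 2)
        ((I t + P t) * (-(α + γ) * k * I t * S t - (σ + ρ) * k * P t * S t)) t ∧
      (I t + P t) * (-(α + γ) * k * I t * S t - (σ + ρ) * k * P t * S t) ≤ 0 ∧
      (S t = 0 →
        (I t + P t) * (-(α + γ) * k * I t * S t - (σ + ρ) * k * P t * S t) = 0) := by
  intro t
  have htotal : (-δ * I t - (α + γ) * k * I t * S t + μ * P t) +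
      (δ * I t - (σ + ρ) * k * P t * S t - μ * P t) =
      -(α + γ) * k * I t * S t - (σ + ρ) * k * P t * S t := by ring
  have hI₀ := hInn t
  have hP₀ := hPnn t
  have hS₀ := hSnn t
  have hloss : 0 ≤ (α + γ) * k * I t * S t + (σ + ρ) * k * P t * S t := by positivity
  refine ⟨?_, ?_, fun hS => by rw [hS]; ring⟩
  · rw [← htotal]
    exact ((hI t).add (hP t)).half_sq
  · exact mul_nonpos_of_nonneg_of_nonpos (by positivity) (by linarith)

/-- The Lyapunov function L = ½(I+P)² is nonincreasing along IPSR trajectories. -/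
theorem ipsr_lyapunov (α γ σ ρ δ μ k : ℝ)
    (hα : 0 < α) (hγ : 0 < γ) (hσ : 0 < σ) (hρ : 0 < ρ)
    (hδ : 0 < δ) (hμ : 0 < μ) (hk : 0 < k)
    (I P S : ℝ → ℝ)
    (hInn : ∀ t, 0 ≤ I t) (hPnn : ∀ t, 0 ≤ P t) (hSnn : ∀ t, 0 ≤ S t)
    (hI : ∀ t, HasDerivAt I (-δ * I t - (α + γ) * k * I t * S t + μ * P t) t)
    (hP : ∀ t, HasDerivAt P (δ * I t - (σ + ρ) * k * P t * S t - μ * P t) t) :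
    ∀ t : ℝ,
      HasDerivAt (fun u => (1 / 2) * (I u + P u) ^ 2)
        ((I t + P t) * (-(α + γ) * k * I t * S t - (σ + ρ) * k * P t * S t)) t ∧
      (I t + P t) * (-(α + γ) * k * I t * S t - (σ + ρ) * k * P t * S t) ≤ 0 ∧
      (S t = 0 →
        (I t + P t) * (-(α + γ) * k * I t * S t - (σ + ρ) * k * P t * S t) = 0) :=
  ipsr_lyapunov_general α γ σ ρ δ μ k hα hγ hσ hρ hk I P S hInn hPnn hSnn hI hP
end
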